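/- For every m ≥ 0, the generating function of centrally symmetric permutations of even degree satisfies Φ_HT(2m; z) := ∑_{s ∈ S^HT_{2m}} z^{inv(s)} = [∏_{i=1}^{m} (1 + z^{2i-1})] · Φ(m; z²), where Φ(m; w) = ∑_{s ∈ S_m} w^{inv(s)}. -/

import Mathlib

/-!
Deleting the value `0` from a permutation of `n + 1` letters, placed at position `k`, removes exactly
`k` inversions; hence `Φ(n + 1; w) = (1 + w + ⋯ + w ^ n) Φ(n; w)`.
In a centrally symmetric permutation of `2m + 2` letters the value `0` sits at some position `k` and
the maximal value at the mirror position `k.rev`. Deleting both leaves a centrally symmetric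
permutation of `2m` letters and removes `2k` or `2k - 1` inversions, according as `k ≤ m` or not.
These exponents run through `0, 2, …, 2m` and `2m + 1, 2m + 3, …, 4m + 1`, which produces the factor
`(1 + z ^ (2m + 1)) (1 + z ^ 2 + ⋯ + z ^ (2m))`, and induction on `m` finishes the proof.
-/

def inversions {n : ℕ} (s : Equiv.Perm (Fin n)) : ℕ :=
  (Finset.univ.filter fun p : Fin n × Fin n => p.1 < p.2 ∧ s p.2 < s p.1).card

def htPerms (n : ℕ) : Finset (Equiv.Perm (Fin n)) :=
  Finset.univ.filter fun s => ∀ i : Fin n, s i.rev = (s i).rev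

open Equiv Finset

lemma Fin.val_succAbove {n : ℕ} (k : Fin (n + 1)) (i : Fin n) :
    (k.succAbove i : ℕ) = if (i : ℕ) < k then (i : ℕ) else (i : ℕ) + 1 := by
  rw [Fin.succAbove]
  split_ifs <;> simp_all [Fin.lt_def]

section insertAt

variable {n : ℕ}

/-- The permutation sending `k` to `v` that acts as `σ` between the remaining positions and the
remaining values, both listed in increasing order. -/
def insertAt (k v : Fin (n + 1)) (σ : Perm (Fin n)) : Perm (Fin (n + 1)) :=
  (finSuccEquiv' k).trans (σ.optionCongr.trans (finSuccEquiv' v).symm)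

@[simp]
lemma insertAt_apply_self (k v : Fin (n + 1)) (σ : Perm (Fin n)) : insertAt k v σ k = v := by
  simp [insertAt]

@[simp]
lemma insertAt_apply_succAbove (k v : Fin (n + 1)) (σ : Perm (Fin n)) (i : Fin n) :
    insertAt k v σ (k.succAbove i) = v.succAbove (σ i) := by
  simp [insertAt]

lemma insertAt_injective (k v : Fin (n + 1)) : Function.Injective (insertAt k v) :=
  fun σ σ' h => Equiv.ext fun i => by simpa using DFunLike.congr_fun h (k.succAbove i)

lemma insertAt_inj {k k' v : Fin (n + 1)} {σ σ' : Perm (Fin n)} :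
    insertAt k v σ = insertAt k' v σ' ↔ k = k' ∧ σ = σ' := by
  refine ⟨fun h => ?_, by rintro ⟨rfl, rfl⟩; rfl⟩
  obtain rfl : k = k' :=
    (insertAt k' v σ').injective (by rw [insertAt_apply_self, ← h, insertAt_apply_self])
  exact ⟨rfl, insertAt_injective k v h⟩

lemma bijective_insertAt (v : Fin (n + 1)) :
    Function.Bijective fun p : Fin (n + 1) × Perm (Fin n) => insertAt p.1 v p.2 := by
  rw [Fintype.bijective_iff_injective_and_card]
  refine ⟨fun p q h => Prod.ext_iff.2 (insertAt_inj.1 h), ?_⟩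
  simp [Fintype.card_perm, Nat.factorial_succ]

lemma exists_insertAt_eq (τ : Perm (Fin (n + 1))) (k : Fin (n + 1)) :
    ∃ σ, insertAt k (τ k) σ = τ := by
  obtain ⟨⟨k', σ⟩, h⟩ := (bijective_insertAt (τ k)).surjective τ
  have hk : τ k = τ k' := by simpa using DFunLike.congr_fun h k'
  obtain rfl : k' = k := τ.injective hk.symm
  exact ⟨σ, h⟩

lemma card_filter_succAbove (k : Fin (n + 1)) (P : Fin (n + 1) → Prop) [DecidablePred P]
    (hk : ¬ P k) : #{i | P (k.succAbove i)} = #{x | P x} := by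
  simp only [card_filter]
  rw [Fin.sum_univ_succAbove _ k]
  simp [hk]

lemma inversions_insertAt (k v : Fin (n + 1)) (σ : Perm (Fin n)) :
    inversions (insertAt k v σ) = inversions σ
      + #{i | k.succAbove i < k ∧ v < v.succAbove (σ i)}
      + #{j | k < k.succAbove j ∧ v.succAbove (σ j) < v} := by
  simp only [inversions, card_filter]
  rw [← (Equiv.prodCongr (finSuccEquiv' k) (finSuccEquiv' k)).symm.sum_comp]
  simp only [Fintype.sum_prod_type, Fintype.sum_option, prodCongr_symm, prodCongr_apply,
    Prod.map, finSuccEquiv'_symm_none, finSuccEquiv'_symm_some, insertAt_apply_self,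
    insertAt_apply_succAbove, lt_irrefl, false_and, if_false, Fin.succAbove_lt_succAbove_iff,
    sum_add_distrib]
  ring

lemma inversions_insertAt_zero (k : Fin (n + 1)) (σ : Perm (Fin n)) :
    inversions (insertAt k 0 σ) = inversions σ + k := by
  simp [inversions_insertAt, card_filter_succAbove k (· < k) (lt_irrefl k), filter_gt_eq_Iio]

lemma inversions_insertAt_last (k : Fin (n + 1)) (σ : Perm (Fin n)) :
    inversions (insertAt k (Fin.last n) σ) = inversions σ + (n - k) := by
  simp [inversions_insertAt, card_filter_succAbove k (k < ·) (lt_irrefl k), filter_lt_eq_Ioi,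
    Fin.le_last]

end insertAt

theorem sum_pow_inversions_succ {R : Type*} [CommSemiring R] (n : ℕ) (w : R) :
    ∑ τ : Perm (Fin (n + 1)), w ^ inversions τ =
      (∑ j ∈ range (n + 1), w ^ j) * ∑ σ : Perm (Fin n), w ^ inversions σ := by
  rw [← Fintype.sum_bijective _ (bijective_insertAt 0)
      (fun p => w ^ (p.1 : ℕ) * w ^ inversions p.2) _
      fun p => by rw [inversions_insertAt_zero, pow_add, mul_comm],
    ← Fin.sum_univ_eq_sum_range (w ^ ·), sum_mul_sum, Fintype.sum_prod_type]

section htPerms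

variable {m : ℕ}

def revIndex (k : Fin (2 * m + 2)) : Fin (2 * m + 1) :=
  ⟨if (k : ℕ) ≤ m then 2 * m - k else 2 * m + 1 - k, by split_ifs <;> omega⟩

lemma succAbove_revIndex (k : Fin (2 * m + 2)) : k.succAbove (revIndex k) = k.rev := by
  ext
  simp only [Fin.val_succAbove, Fin.val_rev, revIndex]
  split_ifs <;> omega

def skipPair (k : Fin (2 * m + 2)) (i : Fin (2 * m)) : Fin (2 * m + 2) :=
  k.succAbove ((revIndex k).succAbove i)

lemma skipPair_rev (k : Fin (2 * m + 2)) (i : Fin (2 * m)) :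
    skipPair k i.rev = (skipPair k i).rev := by
  ext
  simp only [skipPair, Fin.val_succAbove, Fin.val_rev, revIndex]
  split_ifs <;> omega

lemma eq_or_eq_rev_or_exists_skipPair (k x : Fin (2 * m + 2)) :
    x = k ∨ x = k.rev ∨ ∃ i, skipPair k i = x := by
  by_cases hk : x = k
  · exact Or.inl hk
  obtain ⟨j, rfl⟩ := Fin.exists_succAbove_eq hk
  by_cases hj : j = revIndex k
  · exact Or.inr (Or.inl (by rw [hj, succAbove_revIndex]))
  obtain ⟨i, rfl⟩ := Fin.exists_succAbove_eq hj
  exact Or.inr (Or.inr ⟨i, rfl⟩)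

def htInsert (k : Fin (2 * m + 2)) (σ : Perm (Fin (2 * m))) : Perm (Fin (2 * m + 2)) :=
  insertAt k 0 (insertAt (revIndex k) (Fin.last _) σ)

@[simp]
lemma htInsert_apply_self (k : Fin (2 * m + 2)) (σ : Perm (Fin (2 * m))) : htInsert k σ k = 0 :=
  insertAt_apply_self _ _ _

@[simp]
lemma htInsert_apply_rev (k : Fin (2 * m + 2)) (σ : Perm (Fin (2 * m))) :
    htInsert k σ k.rev = Fin.last _ := by
  simp [htInsert, ← succAbove_revIndex]

@[simp]
lemma htInsert_apply_skipPair (k : Fin (2 * m + 2)) (σ : Perm (Fin (2 * m))) (i : Fin (2 * m)) :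
    htInsert k σ (skipPair k i) = (σ i).castSucc.succ := by
  simp [htInsert, skipPair]

lemma htInsert_mem_htPerms_iff (k : Fin (2 * m + 2)) (σ : Perm (Fin (2 * m))) :
    htInsert k σ ∈ htPerms (2 * m + 2) ↔ σ ∈ htPerms (2 * m) := by
  simp only [htPerms, mem_filter, mem_univ, true_and]
  constructor
  · intro h i
    have := h (skipPair k i)
    rw [← skipPair_rev, htInsert_apply_skipPair, htInsert_apply_skipPair] at this
    simpa [Fin.rev_succ, Fin.rev_castSucc] using this
  · intro h x
    rcases eq_or_eq_rev_or_exists_skipPair k x with rfl | rfl | ⟨i, rfl⟩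
    · simp
    · simp
    · rw [← skipPair_rev, htInsert_apply_skipPair, htInsert_apply_skipPair, h]
      simp [Fin.rev_succ, Fin.rev_castSucc]

lemma htInsert_inj {k k' : Fin (2 * m + 2)} {σ σ' : Perm (Fin (2 * m))} :
    htInsert k σ = htInsert k' σ' ↔ k = k' ∧ σ = σ' := by
  refine ⟨fun h => ?_, by rintro ⟨rfl, rfl⟩; rfl⟩
  obtain ⟨rfl, h⟩ := insertAt_inj.1 h
  exact ⟨rfl, insertAt_injective _ _ h⟩

lemma exists_htInsert_eq {s : Perm (Fin (2 * m + 2))} (hs : s ∈ htPerms (2 * m + 2)) :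
    ∃ k σ, htInsert k σ = s := by
  simp only [htPerms, mem_filter, mem_univ, true_and] at hs
  set k := s.symm 0
  obtain ⟨τ, hτ⟩ := exists_insertAt_eq s k
  rw [s.apply_symm_apply] at hτ
  have hτk : τ (revIndex k) = Fin.last _ := by
    have hsk : s k.rev = Fin.last _ := by rw [hs, s.apply_symm_apply, Fin.rev_zero]
    rw [← succAbove_revIndex, ← hτ, insertAt_apply_succAbove, Fin.succAbove_zero,
      ← Fin.succ_last] at hsk
    exact Fin.succ_injective _ hsk
  obtain ⟨σ, hσ⟩ := exists_insertAt_eq τ (revIndex k)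
  rw [hτk] at hσ
  exact ⟨k, σ, by rw [htInsert, hσ, hτ]⟩

lemma inversions_htInsert (k : Fin (2 * m + 2)) (σ : Perm (Fin (2 * m))) :
    inversions (htInsert k σ) = inversions σ + (k + (2 * m - revIndex k)) := by
  rw [htInsert, inversions_insertAt_zero, inversions_insertAt_last, add_assoc, add_comm (k : ℕ)]

end htPerms

lemma sum_pow_val_add_sub_revIndex {R : Type*} [CommSemiring R] (m : ℕ) (z : R) :
    ∑ k : Fin (2 * m + 2), z ^ ((k : ℕ) + (2 * m - revIndex k)) =
      (1 + z ^ (2 * m + 1)) * ∑ j ∈ range (m + 1), (z ^ 2) ^ j := by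
  have hexp : ∀ k : Fin (2 * m + 2),
      (k : ℕ) + (2 * m - revIndex k) = if (k : ℕ) ≤ m then 2 * (k : ℕ) else 2 * (k : ℕ) - 1 := by
    intro k
    simp only [revIndex]
    split_ifs <;> omega
  simp only [hexp]
  rw [Fin.sum_univ_eq_sum_range (fun k => z ^ if k ≤ m then 2 * k else 2 * k - 1),
    show 2 * m + 2 = (m + 1) + (m + 1) by ring, sum_range_add, add_mul, one_mul, mul_sum]
  congr 1 <;> refine sum_congr rfl fun j hj => ?_ <;> rw [mem_range] at hj
  · rw [if_pos (by omega), pow_mul]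
  · rw [if_neg (by omega), ← pow_mul, ← pow_add]
    congr 1
    omega

theorem sum_htPerms_pow_inversions_add_two {R : Type*} [CommSemiring R] (m : ℕ) (z : R) :
    ∑ s ∈ htPerms (2 * m + 2), z ^ inversions s =
      (1 + z ^ (2 * m + 1)) * (∑ j ∈ range (m + 1), (z ^ 2) ^ j) *
        ∑ σ ∈ htPerms (2 * m), z ^ inversions σ := by
  rw [← sum_pow_val_add_sub_revIndex, sum_mul_sum, ← sum_product']
  symm
  refine sum_nbij (fun p => htInsert p.1 p.2) (fun p hp => ?_) (fun p _ q _ h => ?_)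
    (fun s hs => ?_) (fun p _ => ?_)
  · exact (htInsert_mem_htPerms_iff _ _).2 (mem_product.1 hp).2
  · exact Prod.ext_iff.2 (htInsert_inj.1 h)
  · obtain ⟨k, σ, rfl⟩ := exists_htInsert_eq hs
    exact ⟨(k, σ), mem_product.2 ⟨mem_univ _, (htInsert_mem_htPerms_iff k σ).1 hs⟩, rfl⟩
  · rw [inversions_htInsert, ← pow_add, add_comm]

theorem stmt7 {R : Type*} [CommRing R] (m : ℕ) (z : R) :
    (∑ s ∈ htPerms (2 * m), z ^ inversions s) =
      (∏ i ∈ Finset.range m, (1 + z ^ (2 * i + 1))) *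
        ∑ s : Equiv.Perm (Fin m), (z ^ 2) ^ inversions s := by
  induction m with
  | zero => simp [htPerms, inversions]
  | succ m ih =>
    rw [mul_add_one, sum_htPerms_pow_inversions_add_two, ih, prod_range_succ,
      sum_pow_inversions_succ]
    ring
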